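/- arXiv:1112.4102 — 4 statements merged into one kernel-verified Lean document; each statement's English description precedes it below -/
import Mathlib

section
/- Let T₁ and T₂ be nonnegative self-adjoint operators on separable Hilbert spaces H₁ and H₂ whose spectral measures have no atoms except possibly at 0. If Ψ ∈ H₁ ⊗ H₂ lies in the orthogonal complement of (ker T₁) ⊗ H₂ + H₁ ⊗ (ker T₂), then Ψ is not an eigenvector of T₁ ⊗ T₂ for any eigenvalue m² ≥ 0; equivalently the restriction of T₁ ⊗ T₂ to the subspace (continuous part of T₁) ⊗ (continuous part of T₂) has empty point spectrum. -/
/-!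
Identify `Ψ` with the conjugate-linear operator `K : H₁ → H₂`, `⟪K x, y⟫ = ⟪Ψ, x ⊗ y⟫`; it is
compact, being a norm limit of the finite-rank operators coming from finite sums of elementary
tensors. The eigenvalue equation becomes `T₂ K T₁ = m² K`, so `D = K* T₂ K` is a compact
self-adjoint operator commuting with `T₁`. An eigenspace of `D` for a nonzero eigenvalue is finite
dimensional and `T₁`-invariant, hence contains an eigenvector of `T₁`; its eigenvalue cannot be
nonzero, and if it is zero then `K`, hence `D`, kills the vector. So `D = 0`, and positivity of
`T₂` gives `T₂ K = 0`: `K` maps into `ker T₂`, and orthogonality of `Ψ` to `H₁ ⊗ ker T₂` forces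
`K = 0`, i.e. `Ψ = 0`.
-/

open scoped InnerProductSpace ComplexConjugate

open ContinuousLinearMap Module.End Submodule

theorem LinearMap.norm_apply_apply_of_inner_eq {𝕜 E F G : Type*} [RCLike 𝕜]
    [NormedAddCommGroup E] [InnerProductSpace 𝕜 E] [NormedAddCommGroup F] [InnerProductSpace 𝕜 F]
    [NormedAddCommGroup G] [InnerProductSpace 𝕜 G] {B : E →ₗ[𝕜] F →ₗ[𝕜] G}
    (hB : ∀ x x' y y', ⟪B x y, B x' y'⟫_𝕜 = ⟪x, x'⟫_𝕜 * ⟪y, y'⟫_𝕜) (x : E) (y : F) :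
    ‖B x y‖ = ‖x‖ * ‖y‖ := by
  have h := hB x x y y
  simp only [inner_self_eq_norm_sq_to_K, ← mul_pow] at h
  exact (pow_left_inj₀ (norm_nonneg _) (by positivity) two_ne_zero).mp (mod_cast h)

theorem LinearMap.IsSymmetric.of_dense_span {𝕜 G : Type*} [RCLike 𝕜] [NormedAddCommGroup G]
    [InnerProductSpace 𝕜 G] {s : Set G} (hs : Dense (span 𝕜 s : Set G)) (S : G →L[𝕜] G)
    (h : ∀ a ∈ s, ∀ b ∈ s, ⟪S a, b⟫_𝕜 = ⟪a, S b⟫_𝕜) : S.IsSymmetric := by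
  have h₁ (a : G) (ha : a ∈ s) : innerSL 𝕜 (S a) = (innerSL 𝕜 a).comp S :=
    ContinuousLinearMap.ext_on hs fun b hb ↦ h a ha b hb
  have h₂ (b : G) : innerSL 𝕜 (S b) = (innerSL 𝕜 b).comp S :=
    ContinuousLinearMap.ext_on hs fun a ha ↦ by
      have hab : ⟪S a, b⟫_𝕜 = ⟪a, S b⟫_𝕜 := congr($(h₁ a ha) b)
      simp only [innerSL_apply_apply, ContinuousLinearMap.comp_apply]
      rw [← inner_conj_symm, ← hab, inner_conj_symm]
  exact fun a b ↦ congr($(h₂ a) b)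

theorem LinearMap.IsSymmetric.of_apply_apply_eq {𝕜 E F G : Type*} [RCLike 𝕜]
    [NormedAddCommGroup E] [InnerProductSpace 𝕜 E] [NormedAddCommGroup F] [InnerProductSpace 𝕜 F]
    [NormedAddCommGroup G] [InnerProductSpace 𝕜 G] {B : E →ₗ[𝕜] F →ₗ[𝕜] G}
    (hB : ∀ x x' y y', ⟪B x y, B x' y'⟫_𝕜 = ⟪x, x'⟫_𝕜 * ⟪y, y'⟫_𝕜)
    (hdense : Dense (span 𝕜 {z | ∃ x y, B x y = z} : Set G)) {T₁ : E →ₗ[𝕜] E} {T₂ : F →ₗ[𝕜] F}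
    (hT₁ : T₁.IsSymmetric) (hT₂ : T₂.IsSymmetric) {S : G →L[𝕜] G}
    (hST : ∀ x y, S (B x y) = B (T₁ x) (T₂ y)) : S.IsSymmetric :=
  .of_dense_span hdense S <| by
    rintro _ ⟨x, y, rfl⟩ _ ⟨x', y', rfl⟩
    rw [hST, hST, hB, hB, hT₁, hT₂]

theorem ContinuousLinearMap.IsPositive.apply_eq_zero_of_inner_eq_zero {E : Type*}
    [NormedAddCommGroup E] [InnerProductSpace ℂ E] [CompleteSpace E] {T : E →L[ℂ] E}
    (hT : T.IsPositive) {x : E} (hx : ⟪x, T x⟫_ℂ = 0) : T x = 0 := by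
  obtain ⟨R, rfl⟩ := CStarAlgebra.nonneg_iff_eq_star_mul_self.mp ((nonneg_iff_isPositive T).mpr hT)
  have hR : R x = 0 := by
    rwa [star_eq_adjoint, mul_apply_eq_comp, adjoint_inner_right, inner_self_eq_zero] at hx
  simp [hR]

section PartialInner

variable {𝕜 E F G : Type*} [RCLike 𝕜]
  [NormedAddCommGroup E] [InnerProductSpace 𝕜 E]
  [NormedAddCommGroup F] [InnerProductSpace 𝕜 F] [CompleteSpace F]
  [NormedAddCommGroup G] [InnerProductSpace 𝕜 G]

/-- `partialInner B Φ x` is the Riesz representative of `y ↦ ⟪Φ, B x y⟫`; when `B` models the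
tensor product `E ⊗ F`, this is the conjugate-linear operator `E → F` associated with `Φ`. -/
noncomputable def partialInner (B : E →L[𝕜] F →L[𝕜] G) : G →L[𝕜] E →L⋆[𝕜] F :=
  compSL E (StrongDual 𝕜 F) F (RingHom.id 𝕜) (starRingEnd 𝕜)
      (InnerProductSpace.toDual 𝕜 F).symm.toContinuousLinearEquiv.toContinuousLinearMap |>.comp <|
    (((compL 𝕜 E (F →L[𝕜] G) (F →L[𝕜] 𝕜)).flip B).comp (compL 𝕜 F G 𝕜)).comp (innerSL 𝕜)

variable {B : E →L[𝕜] F →L[𝕜] G}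

@[simp]
theorem inner_partialInner_apply (Φ : G) (x : E) (y : F) :
    ⟪partialInner B Φ x, y⟫_𝕜 = ⟪Φ, B x y⟫_𝕜 := by
  simp [partialInner]

theorem partialInner_elementary_apply
    (hB : ∀ x x' y y', ⟪B x y, B x' y'⟫_𝕜 = ⟪x, x'⟫_𝕜 * ⟪y, y'⟫_𝕜) (a x : E) (b : F) :
    partialInner B (B a b) x = ⟪x, a⟫_𝕜 • b :=
  ext_inner_right 𝕜 fun y ↦ by simp [hB, inner_smul_left]

theorem isCompactOperator_partialInner_elementary
    (hB : ∀ x x' y y', ⟪B x y, B x' y'⟫_𝕜 = ⟪x, x'⟫_𝕜 * ⟪y, y'⟫_𝕜) (a : E) (b : F) :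
    IsCompactOperator (partialInner B (B a b)) := by
  have h : ⇑(partialInner B (B a b)) = (· • b) ∘ innerSLFlip 𝕜 a :=
    funext (partialInner_elementary_apply hB a · b)
  rw [h]
  exact (isCompactOperator_of_locallyCompactSpace_dom _).continuous_comp
    (continuous_id.smul continuous_const)

theorem isCompactOperator_partialInner
    (hB : ∀ x x' y y', ⟪B x y, B x' y'⟫_𝕜 = ⟪x, x'⟫_𝕜 * ⟪y, y'⟫_𝕜)
    (hdense : Dense (span 𝕜 {z | ∃ x y, B x y = z} : Set G)) (Φ : G) :
    IsCompactOperator (partialInner B Φ) := by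
  let C := (compactOperator (starRingEnd 𝕜) E F).comap (partialInner B).toLinearMap
  have hC : IsClosed (C : Set G) :=
    isClosed_setOfPred_isCompactOperator.preimage (partialInner B).continuous
  have hspan : span 𝕜 {z | ∃ x y, B x y = z} ≤ C :=
    span_le.mpr <| by
      rintro _ ⟨a, b, rfl⟩
      exact isCompactOperator_partialInner_elementary hB a b
  exact hC.closure_subset_iff.mpr hspan (hdense Φ)

theorem eq_zero_of_partialInner_eq_zero (hdense : Dense (span 𝕜 {z | ∃ x y, B x y = z} : Set G))
    {Φ : G} (h : partialInner B Φ = 0) : Φ = 0 := by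
  have hΦ : innerSL 𝕜 Φ = 0 := ContinuousLinearMap.ext_on hdense <| by
    rintro _ ⟨x, y, rfl⟩
    simp [← inner_partialInner_apply, h]
  simpa using congr($hΦ Φ)

theorem apply_partialInner_apply {T₁ : E →L[𝕜] E} {T₂ : F →L[𝕜] F} {S : G →L[𝕜] G}
    (hT₂ : T₂.IsSymmetric) (hS : S.IsSymmetric) (hST : ∀ x y, S (B x y) = B (T₁ x) (T₂ y))
    (Φ : G) (x : E) : T₂ (partialInner B Φ (T₁ x)) = partialInner B (S Φ) x :=
  ext_inner_right 𝕜 fun y ↦ by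
    rw [← coe_coe, hT₂, coe_coe, inner_partialInner_apply, inner_partialInner_apply, ← hST,
      ← coe_coe, ← hS, coe_coe]

end PartialInner

section Spectral

variable {E F : Type*} [NormedAddCommGroup E] [InnerProductSpace ℂ E] [CompleteSpace E]
  [NormedAddCommGroup F] [InnerProductSpace ℂ F]

theorem exists_real_eigenvector_mem_eigenspace {D T : E →L[ℂ] E} (hD : IsCompactOperator D)
    (hT : T.IsSymmetric) (hDT : Commute D T) {μ : ℂ} (hμ : μ ≠ 0)
    (hμD : HasEigenvalue (D : E →ₗ[ℂ] E) μ) :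
    ∃ w ∈ eigenspace (D : E →ₗ[ℂ] E) μ, w ≠ 0 ∧ ∃ c : ℝ, T w = (c : ℂ) • w := by
  set V := eigenspace (D : E →ₗ[ℂ] E) μ
  have : FiniteDimensional ℂ V := finite_dimensional_eigenspace hD μ hμ
  have : Nontrivial V := Submodule.nontrivial_iff_ne_bot.mpr (hasEigenvalue_iff.mp hμD)
  have hTV : ∀ x ∈ V, T x ∈ V := fun x hx ↦ by
    rw [mem_eigenspace_iff] at hx ⊢
    change D (T x) = μ • T x
    rw [← mul_apply_eq_comp, hDT.eq, mul_apply_eq_comp, show D x = μ • x from hx, map_smul]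
  obtain ⟨c, hc⟩ := exists_eigenvalue ((T : E →ₗ[ℂ] E).restrict hTV)
  obtain ⟨w, hw, hw0⟩ := hc.exists_hasEigenvector
  have hTw : T w = c • (w : E) := congr(Subtype.val $(mem_eigenspace_iff.mp hw))
  have hw0' : (w : E) ≠ 0 := by simpa using hw0
  have hc_real : conj c = c :=
    hT.conj_eigenvalue_eq_self (hasEigenvalue_of_hasEigenvector ⟨mem_eigenspace_iff.mpr hTw, hw0'⟩)
  exact ⟨w, w.2, hw0', c.re, by rw [hTw, Complex.conj_eq_iff_re.mp hc_real]⟩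

theorem comp_comp_eq_zero_of_intertwines {T₁ : E →L[ℂ] E} {T₂ : F →L[ℂ] F} {K : E →L⋆[ℂ] F}
    {K' : F →L⋆[ℂ] E} (hT₁ : T₁.IsSymmetric)
    (hT₁cont : ∀ (x : E) (lam : ℝ), lam ≠ 0 → T₁ x = (lam : ℂ) • x → x = 0)
    (hT₂ : T₂.IsSymmetric) (hK : IsCompactOperator K) (hKK' : ∀ x y, ⟪K' y, x⟫_ℂ = ⟪K x, y⟫_ℂ)
    {c : ℝ} (hint : ∀ x, T₂ (K (T₁ x)) = (c : ℂ) • K x) (hker : ∀ x, T₁ x = 0 → K x = 0) :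
    K'.comp (T₂.comp K) = 0 := by
  have hT₁' : ∀ u v, ⟪T₁ u, v⟫_ℂ = ⟪u, T₁ v⟫_ℂ := hT₁
  have hT₂' : ∀ u v, ⟪T₂ u, v⟫_ℂ = ⟪u, T₂ v⟫_ℂ := hT₂
  set D := K'.comp (T₂.comp K)
  have hD_compact : IsCompactOperator D := hK.clm_comp (K'.comp T₂)
  have hD x x' : ⟪D x, x'⟫_ℂ = ⟪K x', T₂ (K x)⟫_ℂ := hKK' x' _
  have hD_symm : D.IsSymmetric := fun a b ↦ by
    change ⟪D a, b⟫_ℂ = ⟪a, D b⟫_ℂ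
    rw [hD, ← inner_conj_symm a, hD, ← hT₂', inner_conj_symm]
  have hDT₁ : Commute D T₁ := ext fun x ↦ ext_inner_right ℂ fun x' ↦ by
    rw [mul_apply_eq_comp, mul_apply_eq_comp, hT₁', hD, hD, hint, ← hT₂', hint, inner_smul_left,
      inner_smul_right, Complex.conj_ofReal]
  refine (eq_zero_of_forall_hasEigenvalue_eq_zero hD_compact hD_symm).mp
    fun μ hμ ↦ by_contra fun hμ0 ↦ ?_
  obtain ⟨w, hwD, hw0, c', hT₁w⟩ :=
    exists_real_eigenvector_mem_eigenspace hD_compact hT₁ hDT₁ hμ0 hμ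
  rcases eq_or_ne c' 0 with rfl | hc'
  · have hDw : D w = 0 := by simp [D, hker w (by simpa using hT₁w)]
    rw [mem_eigenspace_iff, coe_coe, hDw] at hwD
    exact hw0 ((smul_eq_zero.mp hwD.symm).resolve_left hμ0)
  · exact hw0 (hT₁cont w c' hc' hT₁w)

end Spectral

theorem stmt_1_general
    {H₁ H₂ H : Type*}
    [NormedAddCommGroup H₁] [InnerProductSpace ℂ H₁] [CompleteSpace H₁]
    [NormedAddCommGroup H₂] [InnerProductSpace ℂ H₂] [CompleteSpace H₂]
    [NormedAddCommGroup H] [InnerProductSpace ℂ H]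
    (T₁ : H₁ →L[ℂ] H₁) (T₂ : H₂ →L[ℂ] H₂)
    (hT₁sa : IsSelfAdjoint T₁) (hT₂sa : IsSelfAdjoint T₂)
    (hT₂pos : ∀ y, 0 ≤ (⟪y, T₂ y⟫_ℂ).re)
    (hT₁cont : ∀ (x : H₁) (lam : ℝ), lam ≠ 0 → T₁ x = (lam : ℂ) • x → x = 0)
    (j : H₁ →ₗ[ℂ] H₂ →ₗ[ℂ] H)
    (hj : ∀ (x x' : H₁) (y y' : H₂), ⟪j x y, j x' y'⟫_ℂ = ⟪x, x'⟫_ℂ * ⟪y, y'⟫_ℂ)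
    (hdense : Dense (↑(Submodule.span ℂ {z : H | ∃ x y, j x y = z}) : Set H))
    (S : H →L[ℂ] H) (hS : ∀ x y, S (j x y) = j (T₁ x) (T₂ y))
    (Ψ : H)
    (hΨ : ∀ z ∈ Submodule.span ℂ
      ({z : H | ∃ x y, T₁ x = 0 ∧ j x y = z} ∪ {z : H | ∃ x y, T₂ y = 0 ∧ j x y = z}),
      ⟪z, Ψ⟫_ℂ = 0)
    (m : ℝ) (heig : S Ψ = ((m ^ 2 : ℝ) : ℂ) • Ψ) :
    Ψ = 0 := by
  have hT₁ := hT₁sa.isSymmetric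
  have hT₂ := hT₂sa.isSymmetric
  let J : H₁ →L[ℂ] H₂ →L[ℂ] H :=
    j.mkContinuous₂ 1 fun x y ↦ by rw [one_mul, j.norm_apply_apply_of_inner_eq hj]
  have hS_symm : S.IsSymmetric := .of_apply_apply_eq hj hdense hT₁ hT₂ hS
  set K := partialInner J Ψ
  have hK_ker x (hx : T₁ x = 0) : K x = 0 := ext_inner_right ℂ fun y ↦ by
    rw [inner_partialInner_apply, ← inner_conj_symm,
      hΨ (J x y) (subset_span (.inl ⟨x, y, hx, rfl⟩)), map_zero, inner_zero_left]
  have hK_int x : T₂ (K (T₁ x)) = ((m ^ 2 : ℝ) : ℂ) • K x := by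
    rw [apply_partialInner_apply hT₂ hS_symm hS, heig, map_smul, smul_apply]
  have hD : (partialInner J.flip Ψ).comp (T₂.comp K) = 0 :=
    comp_comp_eq_zero_of_intertwines hT₁ hT₁cont hT₂
      (isCompactOperator_partialInner (B := J) hj hdense Ψ)
      (fun x y ↦ by rw [inner_partialInner_apply, flip_apply, inner_partialInner_apply]) hK_int hK_ker
  have hT₂_pos : T₂.IsPositive :=
    ⟨hT₂, fun y ↦ by simpa [reApplyInnerSelf_apply, inner_re_symm] using hT₂pos y⟩
  have hT₂K x : T₂ (K x) = 0 := hT₂_pos.apply_eq_zero_of_inner_eq_zero <| by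
    have h := congr(⟪$hD x, x⟫_ℂ)
    simp only [comp_apply, zero_apply, inner_zero_left, inner_partialInner_apply, flip_apply] at h
    rwa [← inner_partialInner_apply] at h
  refine eq_zero_of_partialInner_eq_zero (B := J) hdense (ext fun x ↦ ?_)
  rw [zero_apply, ← inner_self_eq_zero (𝕜 := ℂ), inner_partialInner_apply, ← inner_conj_symm,
    hΨ (J x (K x)) (subset_span (.inr ⟨x, K x, hT₂K x, rfl⟩)), map_zero]

/-- Let T₁, T₂ be nonnegative self-adjoint bounded operators on Hilbert spaces H₁, H₂ whose
spectral measures have no atoms except possibly at 0 (i.e. no nonzero eigenvalues).  The Hilbert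
tensor product H₁ ⊗ H₂ is modelled by a bilinear map `j` into a Hilbert space `H` with
factorizing inner products and total range, and `S` models T₁ ⊗ T₂.  If Ψ is orthogonal to
(ker T₁) ⊗ H₂ + H₁ ⊗ (ker T₂), then Ψ is not an eigenvector of T₁ ⊗ T₂ for any eigenvalue
m² ≥ 0. -/
theorem stmt_1
    {H₁ H₂ H : Type*}
    [NormedAddCommGroup H₁] [InnerProductSpace ℂ H₁] [CompleteSpace H₁]
    [NormedAddCommGroup H₂] [InnerProductSpace ℂ H₂] [CompleteSpace H₂]
    [NormedAddCommGroup H] [InnerProductSpace ℂ H] [CompleteSpace H]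
    (T₁ : H₁ →L[ℂ] H₁) (T₂ : H₂ →L[ℂ] H₂)
    (hT₁sa : IsSelfAdjoint T₁) (hT₂sa : IsSelfAdjoint T₂)
    (hT₁pos : ∀ x, 0 ≤ (⟪x, T₁ x⟫_ℂ).re) (hT₂pos : ∀ y, 0 ≤ (⟪y, T₂ y⟫_ℂ).re)
    (hT₁cont : ∀ (x : H₁) (lam : ℝ), lam ≠ 0 → T₁ x = (lam : ℂ) • x → x = 0)
    (hT₂cont : ∀ (y : H₂) (lam : ℝ), lam ≠ 0 → T₂ y = (lam : ℂ) • y → y = 0)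
    (j : H₁ →ₗ[ℂ] H₂ →ₗ[ℂ] H)
    (hj : ∀ (x x' : H₁) (y y' : H₂), ⟪j x y, j x' y'⟫_ℂ = ⟪x, x'⟫_ℂ * ⟪y, y'⟫_ℂ)
    (hdense : Dense (↑(Submodule.span ℂ {z : H | ∃ x y, j x y = z}) : Set H))
    (S : H →L[ℂ] H) (hS : ∀ x y, S (j x y) = j (T₁ x) (T₂ y))
    (Ψ : H)
    (hΨ : ∀ z ∈ Submodule.span ℂ
      ({z : H | ∃ x y, T₁ x = 0 ∧ j x y = z} ∪ {z : H | ∃ x y, T₂ y = 0 ∧ j x y = z}),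
      ⟪z, Ψ⟫_ℂ = 0)
    (m : ℝ) (hm : 0 ≤ m) (heig : S Ψ = ((m ^ 2 : ℝ) : ℂ) • Ψ) :
    Ψ = 0 :=
  stmt_1_general T₁ T₂ hT₁sa hT₂sa hT₂pos hT₁cont j hj hdense S hS Ψ hΨ m heig
end

section
/- Let U : ℝ → unitary group on a Hilbert space H with self-adjoint generator A and spectral measure E, and let Ψ ∈ H. If the matrix coefficient s ↦ ⟨Ψ, U(s)Ψ⟩ is integrable over ℝ (lies in L¹(ℝ)), then the measure B ↦ ⟨Ψ, E(B)Ψ⟩ is absolutely continuous with respect to Lebesgue measure; in particular ⟨Ψ, E(B)Ψ⟩ = 0 for every Borel set B of Lebesgue measure zero. -/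
/-!
Let `φ` be the characteristic function of `μ`. Smooth `μ` by the centred Gaussian `N(0, v)`: the
Gaussian kernel `exp (-(a - x) ^ 2 / (2 v))` is the characteristic function of `N(0, 1 / v)`, so by
Fubini the density of `μ ∗ N(0, v)` at `a` is `(2πv)^(-1/2) ∫ φ(s) e^{-isa} dN(0, 1 / v)(s)`;
bounding the density of `N(0, 1 / v)` by its maximum `(v / 2π)^(1/2)` shows it is at most
`‖φ‖₁ / (2π)`. Letting `v → 0` gives `μ U ≤ ‖φ‖₁ / (2π) · vol U` for open `U`, and outer
regularity of Lebesgue measure extends this to `μ ≤ ‖φ‖₁ / (2π) • vol`.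
-/

open MeasureTheory ProbabilityTheory Filter Topology Complex
open scoped ENNReal NNReal Real

lemma gaussianPDFReal_le_inv_sqrt (m : ℝ) (v : ℝ≥0) (x : ℝ) :
    gaussianPDFReal m v x ≤ (√(2 * π * v))⁻¹ := by
  refine mul_le_of_le_one_right (by positivity) (Real.exp_le_one_iff.2 ?_)
  exact div_nonpos_of_nonpos_of_nonneg (neg_nonpos.2 (sq_nonneg _)) (by positivity)

lemma integral_gaussianReal_le {f : ℝ → ℝ} (hf : 0 ≤ f) (hfi : Integrable f) (m : ℝ)
    {v : ℝ≥0} (hv : v ≠ 0) :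
    ∫ x, f x ∂gaussianReal m v ≤ (√(2 * π * v))⁻¹ * ∫ x, f x := by
  rw [integral_gaussianReal_eq_integral_smul hv, ← integral_const_mul]
  refine integral_mono (hfi.bdd_mul (c := (√(2 * π * v))⁻¹) (by fun_prop) (ae_of_all _ fun x => ?_))
    (hfi.const_mul _) fun x => ?_
  · rw [Real.norm_of_nonneg (gaussianPDFReal_nonneg m v x)]
    exact gaussianPDFReal_le_inv_sqrt m v x
  · exact mul_le_mul_of_nonneg_right (gaussianPDFReal_le_inv_sqrt m v x) (hf x)

lemma integral_charFun_sub (μ ν : Measure ℝ) [IsFiniteMeasure μ] [IsFiniteMeasure ν] (a : ℝ) :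
    ∫ x, charFun ν (x - a) ∂μ = ∫ s, charFun μ s * cexp (-(s * a) * I) ∂ν := by
  simp_rw [charFun_apply_real, ← integral_mul_const]
  rw [integral_integral_swap]
  · refine integral_congr_ae (ae_of_all _ fun s => integral_congr_ae (ae_of_all _ fun x => ?_))
    beta_reduce
    rw [← Complex.exp_add]
    push_cast
    ring_nf
  · refine Integrable.of_bound (by fun_prop) 1 (ae_of_all _ fun p => ?_)
    simp only [Function.uncurry, ← ofReal_mul, Complex.norm_exp_ofReal_mul_I, le_refl]

lemma norm_integral_charFun_sub_le (μ ν : Measure ℝ) [IsFiniteMeasure μ] [IsFiniteMeasure ν]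
    (a : ℝ) : ‖∫ x, charFun ν (x - a) ∂μ‖ ≤ ∫ s, ‖charFun μ s‖ ∂ν := by
  rw [integral_charFun_sub]
  refine (norm_integral_le_integral_norm _).trans_eq (integral_congr_ae (ae_of_all _ fun s => ?_))
  beta_reduce
  rw [norm_mul, ← ofReal_mul, ← ofReal_neg, Complex.norm_exp_ofReal_mul_I, mul_one]

lemma integral_gaussianPDFReal_le_of_integrable_charFun (μ : Measure ℝ) [IsFiniteMeasure μ]
    (hφ : Integrable (charFun μ)) {v : ℝ≥0} (hv : v ≠ 0) (a : ℝ) :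
    ∫ x, gaussianPDFReal x v a ∂μ ≤ (∫ s, ‖charFun μ s‖) / (2 * π) := by
  set C := ∫ s, ‖charFun μ s‖
  have hkernel (x : ℝ) :
      (Real.exp (-(a - x) ^ 2 / (2 * v)) : ℂ) = charFun (gaussianReal 0 v⁻¹) (x - a) := by
    rw [charFun_gaussianReal, ofReal_exp]
    congr 1
    push_cast
    ring
  have hsmooth : ∫ x, Real.exp (-(a - x) ^ 2 / (2 * v)) ∂μ ≤ (√(2 * π * v⁻¹))⁻¹ * C := calc
    _ = ‖∫ x, (Real.exp (-(a - x) ^ 2 / (2 * v)) : ℂ) ∂μ‖ := by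
      rw [integral_complex_ofReal, norm_real, Real.norm_of_nonneg
        (integral_nonneg fun x => (Real.exp_pos _).le)]
    _ = ‖∫ x, charFun (gaussianReal 0 v⁻¹) (x - a) ∂μ‖ := by simp_rw [hkernel]
    _ ≤ ∫ s, ‖charFun μ s‖ ∂gaussianReal 0 v⁻¹ := norm_integral_charFun_sub_le _ _ a
    _ ≤ _ := integral_gaussianReal_le (fun _ => norm_nonneg _) hφ.norm 0 (inv_ne_zero hv)
  calc ∫ x, gaussianPDFReal x v a ∂μ
      = (√(2 * π * v))⁻¹ * ∫ x, Real.exp (-(a - x) ^ 2 / (2 * v)) ∂μ := integral_const_mul _ _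
    _ ≤ (√(2 * π * v))⁻¹ * ((√(2 * π * v⁻¹))⁻¹ * C) := by gcongr
    _ = C / (2 * π) := by
      rw [← mul_assoc, ← mul_inv, ← Real.sqrt_mul (by positivity), NNReal.coe_inv]
      field_simp
      rw [← mul_pow, Real.sqrt_sq (by positivity)]

lemma lintegral_gaussianReal_apply_le (μ : Measure ℝ) [IsFiniteMeasure μ]
    (hφ : Integrable (charFun μ)) {v : ℝ≥0} (hv : v ≠ 0) (U : Set ℝ) :
    ∫⁻ x, gaussianReal x v U ∂μ ≤
      ENNReal.ofReal ((∫ s, ‖charFun μ s‖) / (2 * π)) * volume U := by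
  simp_rw [gaussianReal_apply _ hv, gaussianPDF_def]
  rw [lintegral_lintegral_swap (by fun_prop), ← setLIntegral_const]
  refine lintegral_mono fun a => ?_
  have hpdf : Integrable (fun x => gaussianPDFReal x v a) μ :=
    Integrable.of_bound (by fun_prop) _ (ae_of_all _ fun x => by
      rw [Real.norm_of_nonneg (gaussianPDFReal_nonneg _ _ _)]
      exact gaussianPDFReal_le_inv_sqrt x v a)
  rw [← ofReal_integral_eq_lintegral_ofReal hpdf
    (ae_of_all _ fun x => gaussianPDFReal_nonneg _ _ _)]
  exact ENNReal.ofReal_le_ofReal (integral_gaussianPDFReal_le_of_integrable_charFun μ hφ hv a)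

lemma tendsto_gaussianReal_apply_of_isOpen {U : Set ℝ} (hU : IsOpen U) {x : ℝ} (hx : x ∈ U) :
    Tendsto (fun v => gaussianReal x v U) (𝓝 0) (𝓝 1) := by
  obtain ⟨δ, hδ, hball⟩ := Metric.isOpen_iff.1 hU x hx
  have hcompl (v : ℝ≥0) : gaussianReal x v Uᶜ ≤ ENNReal.ofReal (v / δ ^ 2) := by
    have hchebyshev := meas_ge_le_variance_div_sq (memLp_id_gaussianReal (μ := x) (v := v) 2) hδ
    simp only [variance_id_gaussianReal, id, integral_id_gaussianReal] at hchebyshev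
    refine (measure_mono fun y hy => ?_).trans hchebyshev
    simpa [Real.dist_eq] using fun h : y ∈ Metric.ball x δ => hy (hball h)
  have hcompl_tendsto : Tendsto (fun v => gaussianReal x v Uᶜ) (𝓝 0) (𝓝 0) := by
    refine tendsto_of_tendsto_of_tendsto_of_le_of_le tendsto_const_nhds ?_ (fun _ => zero_le)
      hcompl
    rw [← ENNReal.ofReal_zero, ← zero_div (δ ^ 2)]
    exact ENNReal.tendsto_ofReal ((NNReal.continuous_coe.tendsto 0).div_const _)
  have h := ENNReal.Tendsto.sub tendsto_const_nhds hcompl_tendsto (Or.inl ENNReal.one_ne_top)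
  rw [tsub_zero] at h
  refine h.congr fun v => ?_
  rw [← prob_compl_eq_one_sub hU.measurableSet.compl, compl_compl]

lemma MeasureTheory.Measure.le_of_forall_isOpen_le {α : Type*} [TopologicalSpace α]
    [MeasurableSpace α] {μ ν : Measure α} [ν.OuterRegular] (h : ∀ U, IsOpen U → μ U ≤ ν U) :
    μ ≤ ν := fun s => by
  rw [s.measure_eq_iInf_isOpen ν]
  exact le_iInf₂ fun U hsU => le_iInf fun hU => (measure_mono hsU).trans (h U hU)

lemma measure_isOpen_le_of_integrable_charFun (μ : Measure ℝ) [IsFiniteMeasure μ]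
    (hφ : Integrable (charFun μ)) {U : Set ℝ} (hU : IsOpen U) :
    μ U ≤ ENNReal.ofReal ((∫ s, ‖charFun μ s‖) / (2 * π)) * volume U := by
  have hmeas (v : ℝ≥0) : Measurable fun x => gaussianReal x v U :=
    Measure.measurable_measure.1
      (measurable_gaussianReal.comp (measurable_id.prodMk measurable_const)) U hU.measurableSet
  have hlim : Tendsto (fun v => ∫⁻ x in U, gaussianReal x v U ∂μ) (𝓝[≠] 0) (𝓝 (μ U)) := by
    simpa using tendsto_lintegral_filter_of_dominated_convergence (μ := μ.restrict U) 1
      (.of_forall hmeas) (.of_forall fun v => ae_of_all _ fun x => prob_le_one) (by simp)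
      (ae_restrict_of_forall_mem hU.measurableSet fun x hx =>
        (tendsto_gaussianReal_apply_of_isOpen hU hx).mono_left nhdsWithin_le_nhds)
  refine le_of_tendsto hlim (eventually_nhdsWithin_of_forall fun v hv => ?_)
  exact (setLIntegral_le_lintegral U _).trans (lintegral_gaussianReal_apply_le μ hφ hv U)

lemma le_smul_volume_of_integrable_charFun (μ : Measure ℝ) [IsFiniteMeasure μ]
    (hφ : Integrable (charFun μ)) :
    μ ≤ ENNReal.ofReal ((∫ s, ‖charFun μ s‖) / (2 * π)) • volume :=
  have : (ENNReal.ofReal ((∫ s, ‖charFun μ s‖) / (2 * π)) • (volume : Measure ℝ)).OuterRegular :=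
    .smul volume ENNReal.ofReal_ne_top
  Measure.le_of_forall_isOpen_le fun _ hU => measure_isOpen_le_of_integrable_charFun μ hφ hU

/-- If the Fourier transform s ↦ ∫ e^{isλ} dμ(λ) of a finite measure μ on ℝ (the matrix
coefficient s ↦ ⟨Ψ, U(s)Ψ⟩ of a unitary group) is integrable on ℝ, then μ is absolutely
continuous with respect to Lebesgue measure; in particular μ(B) = 0 for every Borel set B of
Lebesgue measure zero. -/
theorem stmt_3 (μ : Measure ℝ) [IsFiniteMeasure μ]
    (hint : Integrable (fun s : ℝ => ∫ lam : ℝ, Complex.exp (Complex.I * s * lam) ∂μ)) :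
    μ ≪ volume ∧ ∀ B : Set ℝ, MeasurableSet B → volume B = 0 → μ B = 0 := by
  have hφ : Integrable (charFun μ) := by
    convert hint using 2 with s
    rw [charFun_apply_real]
    exact integral_congr_ae (ae_of_all _ fun x => by ring_nf)
  have hac : μ ≪ volume :=
    Measure.absolutelyContinuous_of_le_smul (le_smul_volume_of_integrable_charFun μ hφ)
  exact ⟨hac, fun _ _ hB => hac hB⟩
end

section
/- Mean ergodic theorem for smeared time averages: let U(t) = e^{itA} be a strongly continuous unitary group on H with A self-adjoint, let E₀ be the orthogonal projection onto ker A, let h ∈ C_c^∞(ℝ) be nonnegative with ∫ h = 1, fix 0 < ε < 1, and set h_T(t) = T^{-ε} h(T^{-ε}(t - T)). Then for every Φ ∈ H, ∫ h_T(t) U(t)Φ dt converges in norm to E₀Φ as T → ∞. -/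
open MeasureTheory Filter
open scoped InnerProductSpace Topology

section SmearAux

variable {H : Type*} [NormedAddCommGroup H] [InnerProductSpace ℂ H]

/-- Integrability of the smeared integrand. -/
lemma meas_aux_integrable
    (U : ℝ → H →L[ℂ] H) (hUcont : ∀ x : H, Continuous fun t : ℝ => U t x)
    {h : ℝ → ℝ} (hc : Continuous h) (hcs : HasCompactSupport h)
    {c : ℝ} (hcne : c ≠ 0) (T : ℝ) (w : H) :
    Integrable (fun t : ℝ => (c * h (c * (t - T))) • U t w) := by
  have hcont : Continuous fun t : ℝ => (c * h (c * (t - T))) • U t w :=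
    (continuous_const.mul (hc.comp (continuous_const.mul
      (continuous_id.sub continuous_const)))).smul (hUcont w)
  let e : ℝ ≃ₜ ℝ := (Homeomorph.subRight T).trans (Homeomorph.mulLeft₀ c hcne)
  have hsupp : HasCompactSupport fun t : ℝ => h (c * (t - T)) := by
    have := hcs.comp_isClosedEmbedding e.isClosedEmbedding
    simpa [e, Function.comp_def] using this
  have hg : HasCompactSupport fun t : ℝ => c * h (c * (t - T)) := by
    have := hsupp.smul_left (f := fun _ : ℝ => c)
    exact this
  have hsupp2 : HasCompactSupport fun t : ℝ => (c * h (c * (t - T))) • U t w := by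
    have := hg.smul_right (f' := fun t : ℝ => U t w)
    exact this
  exact hcont.integrable_of_hasCompactSupport hsupp2

lemma meas_aux_total {h : ℝ → ℝ} {c : ℝ} (hcpos : 0 < c) (T : ℝ) :
    (∫ t : ℝ, c * h (c * (t - T))) = ∫ u : ℝ, h u := by
  rw [MeasureTheory.integral_const_mul]
  have h1 : (∫ t : ℝ, h (c * (t - T))) = ∫ t : ℝ, h (c * t) :=
    integral_sub_right_eq_self (fun t : ℝ => h (c * t)) T
  rw [h1, MeasureTheory.Measure.integral_comp_mul_left h c, smul_eq_mul,
    abs_of_pos (inv_pos.mpr hcpos)]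
  field_simp

lemma meas_aux_translate {h : ℝ → ℝ} (hc : Continuous h) (hcs : HasCompactSupport h) :
    Tendsto (fun v : ℝ => ∫ u : ℝ, |h (u - v) - h u|) (𝓝 0) (𝓝 0) := by
  obtain ⟨C, hC⟩ := hcs.exists_bound_of_continuous hc
  set K : Set ℝ := Metric.cthickening 1 (tsupport h) with hK
  have hKcomp : IsCompact K := hcs.cthickening
  have hKmeas : MeasurableSet K := hKcomp.isClosed.measurableSet
  have hbound_int : Integrable (K.indicator fun _ : ℝ => 2 * C) := by
    rw [integrable_indicator_iff hKmeas]
    exact integrableOn_const hKcomp.measure_lt_top.ne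
  have hmeas : ∀ᶠ v : ℝ in 𝓝 0,
      AEStronglyMeasurable (fun u : ℝ => |h (u - v) - h u|) volume := by
    refine Eventually.of_forall fun v => ?_
    exact (((hc.comp (continuous_id.sub continuous_const)).sub hc).abs).aestronglyMeasurable
  have hsmall : ∀ᶠ v : ℝ in 𝓝 0, |v| ≤ 1 := by
    have := Metric.ball_mem_nhds (0 : ℝ) one_pos
    filter_upwards [this] with v hv
    simpa [Real.dist_eq] using le_of_lt (mem_ball_iff_norm.mp hv)
  have hbnd : ∀ᶠ v : ℝ in 𝓝 0, ∀ᵐ u : ℝ, ‖|h (u - v) - h u|‖ ≤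
      K.indicator (fun _ : ℝ => 2 * C) u := by
    filter_upwards [hsmall] with v hv
    refine Eventually.of_forall fun u => ?_
    rw [Real.norm_eq_abs, abs_abs]
    by_cases hu : u ∈ K
    · rw [Set.indicator_of_mem hu]
      calc |h (u - v) - h u| ≤ |h (u - v)| + |h u| := abs_sub _ _
        _ ≤ C + C := add_le_add (hC _) (hC _)
        _ = 2 * C := by ring
    · rw [Set.indicator_of_notMem hu]
      have h1 : h u = 0 := by
        apply image_eq_zero_of_notMem_tsupport
        exact fun hmem => hu (Metric.self_subset_cthickening _ hmem)
      have h2 : h (u - v) = 0 := by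
        apply image_eq_zero_of_notMem_tsupport
        intro hmem
        apply hu
        apply Metric.mem_cthickening_of_dist_le u (u - v) 1 _ hmem
        simpa [Real.dist_eq] using hv
      simp [h1, h2]
  have hlim : ∀ᵐ u : ℝ, Tendsto (fun v : ℝ => |h (u - v) - h u|) (𝓝 0) (𝓝 0) := by
    refine Eventually.of_forall fun u => ?_
    have hcont : Continuous fun v : ℝ => |h (u - v) - h u| :=
      ((hc.comp (continuous_const.sub continuous_id)).sub continuous_const).abs
    simpa using hcont.tendsto 0
  have := tendsto_integral_filter_of_dominated_convergence (μ := volume)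
      (F := fun (v : ℝ) (u : ℝ) => |h (u - v) - h u|) (f := fun _ : ℝ => (0:ℝ))
      (K.indicator fun _ : ℝ => 2 * C) hmeas hbnd hbound_int hlim
  simpa using this

end SmearAux

/-- The smeared time average. -/
noncomputable def smearI {H : Type*} [NormedAddCommGroup H] [NormedSpace ℂ H]
    (U : ℝ → H →L[ℂ] H) (h : ℝ → ℝ) (ε : ℝ) (T : ℝ) (w : H) : H :=
  ∫ t : ℝ, (T ^ (-ε) * h (T ^ (-ε) * (t - T))) • U t w

/-- Mean ergodic theorem for smeared time averages: U a strongly continuous one-parameter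
unitary group, E₀ the orthogonal projection onto the invariant subspace (= ker of the
generator), h ∈ C_c^∞ nonnegative with ∫ h = 1, 0 < ε < 1, and
h_T(t) = T^{-ε} h(T^{-ε}(t - T)).  Then ∫ h_T(t) U(t)Φ dt → E₀Φ in norm as T → ∞. -/
theorem stmt_5 {H : Type*} [NormedAddCommGroup H] [InnerProductSpace ℂ H] [CompleteSpace H]
    (U : ℝ → H →L[ℂ] H)
    (hUgrp : ∀ s t : ℝ, U (s + t) = U s ∘L U t) (hU0 : U 0 = 1)
    (hUuni : ∀ (s : ℝ) (x y : H), ⟪U s x, U s y⟫_ℂ = ⟪x, y⟫_ℂ)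
    (hUcont : ∀ x : H, Continuous fun t : ℝ => U t x)
    (E₀ : H →L[ℂ] H) (hE₀sa : IsSelfAdjoint E₀) (hE₀idem : E₀ ∘L E₀ = E₀)
    (hE₀inv : ∀ (x : H) (t : ℝ), U t (E₀ x) = E₀ x)
    (hE₀fix : ∀ x : H, (∀ t : ℝ, U t x = x) → E₀ x = x)
    (h : ℝ → ℝ) (hsmooth : ContDiff ℝ (⊤ : ℕ∞) h) (hcs : HasCompactSupport h)
    (hpos : ∀ t, 0 ≤ h t) (hnorm : ∫ t : ℝ, h t = 1)
    (ε : ℝ) (hε0 : 0 < ε) (hε1 : ε < 1)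
    (Φ : H) :
    Tendsto (fun T : ℝ => ∫ t : ℝ, (T ^ (-ε) * h (T ^ (-ε) * (t - T))) • U t Φ)
      atTop (𝓝 (E₀ Φ)) := by
  have hcont_h : Continuous h := hsmooth.continuous
  -- norm preservation
  have hUnorm : ∀ (t : ℝ) (x : H), ‖U t x‖ = ‖x‖ := by
    intro t x
    have h3 := hUuni t x x
    rw [inner_self_eq_norm_sq_to_K, inner_self_eq_norm_sq_to_K] at h3
    have h2 : ‖U t x‖ ^ 2 = ‖x‖ ^ 2 := by exact_mod_cast h3
    nlinarith [norm_nonneg (U t x), norm_nonneg x]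
  -- group inverse
  have hUinv : ∀ (t : ℝ) (x : H), U t (U (-t) x) = x := by
    intro t x
    have h1 : U (t + -t) x = U t (U (-t) x) := by rw [hUgrp t (-t)]; rfl
    rw [← h1]
    simp [hU0]
  have hcpos : ∀ T : ℝ, 0 < T → 0 < T ^ (-ε) := fun T hT => Real.rpow_pos_of_pos hT _
  -- basic facts about smearI for T > 0
  have hint : ∀ T : ℝ, 0 < T → ∀ w : H,
      Integrable (fun t : ℝ => (T ^ (-ε) * h (T ^ (-ε) * (t - T))) • U t w) :=
    fun T hT w => meas_aux_integrable U hUcont hcont_h hcs (ne_of_gt (hcpos T hT)) T w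
  have htotal : ∀ T : ℝ, 0 < T → (∫ t : ℝ, T ^ (-ε) * h (T ^ (-ε) * (t - T))) = 1 := by
    intro T hT
    rw [meas_aux_total (hcpos T hT) T, hnorm]
  have hbound : ∀ T : ℝ, 0 < T → ∀ w : H, ‖smearI U h ε T w‖ ≤ ‖w‖ := by
    intro T hT w
    refine le_trans (norm_integral_le_integral_norm _) ?_
    have heq : (fun t : ℝ => ‖(T ^ (-ε) * h (T ^ (-ε) * (t - T))) • U t w‖)
        = fun t : ℝ => (T ^ (-ε) * h (T ^ (-ε) * (t - T))) * ‖w‖ := by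
      funext t
      rw [norm_smul, hUnorm, Real.norm_eq_abs, abs_of_nonneg]
      exact mul_nonneg (hcpos T hT).le (hpos _)
    rw [heq, MeasureTheory.integral_mul_const, htotal T hT, one_mul]
  have hIadd : ∀ T : ℝ, 0 < T → ∀ w w' : H,
      smearI U h ε T (w + w') = smearI U h ε T w + smearI U h ε T w' := by
    intro T hT w w'
    unfold smearI
    rw [← integral_add (hint T hT w) (hint T hT w')]
    congr 1
    funext t
    rw [map_add, smul_add]
  have hIsmul : ∀ T : ℝ, 0 < T → ∀ (a : ℂ) (w : H),
      smearI U h ε T (a • w) = a • smearI U h ε T w := by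
    intro T hT a w
    unfold smearI
    rw [← integral_smul]
    congr 1
    funext t
    rw [(U t).map_smul, smul_comm]
  -- fixed part
  have hfix : ∀ T : ℝ, 0 < T → smearI U h ε T (E₀ Φ) = E₀ Φ := by
    intro T hT
    unfold smearI
    have heq : (fun t : ℝ => (T ^ (-ε) * h (T ^ (-ε) * (t - T))) • U t (E₀ Φ))
        = fun t : ℝ => (T ^ (-ε) * h (T ^ (-ε) * (t - T))) • E₀ Φ := by
      funext t; rw [hE₀inv]
    rw [heq, integral_smul_const, htotal T hT, one_smul]
  -- generator convergence
  have hgen : ∀ (s : ℝ) (y : H),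
      Tendsto (fun T : ℝ => smearI U h ε T (U s y - y)) atTop (𝓝 0) := by
    intro s y
    have hGtend := meas_aux_translate hcont_h hcs
    have hc0 : Tendsto (fun T : ℝ => T ^ (-ε) * s) atTop (𝓝 0) := by
      simpa using (tendsto_rpow_neg_atTop hε0).mul_const s
    have hcomp : Tendsto (fun T : ℝ => ∫ u : ℝ, |h (u - T ^ (-ε) * s) - h u|)
        atTop (𝓝 0) := hGtend.comp hc0
    have htendsto : Tendsto
        (fun T : ℝ => (∫ u : ℝ, |h (u - T ^ (-ε) * s) - h u|) * ‖y‖) atTop (𝓝 0) := by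
      simpa using hcomp.mul_const ‖y‖
    refine squeeze_zero_norm' ?_ htendsto
    filter_upwards [eventually_gt_atTop (0:ℝ)] with T hT
    have hcp : 0 < T ^ (-ε) := hcpos T hT
    have hcne : T ^ (-ε) ≠ 0 := ne_of_gt hcp
    -- integrability of the shifted integrand
    have hint2 : Integrable
        (fun t : ℝ => (T ^ (-ε) * h (T ^ (-ε) * ((t - s) - T))) • U t y) := by
      simp only [sub_sub]
      exact meas_aux_integrable U hUcont hcont_h hcs hcne (s + T) y
    -- rewrite the smeared average of the generator
    have e1 : smearI U h ε T (U s y - y)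
        = ∫ t : ℝ, ((T ^ (-ε) * h (T ^ (-ε) * ((t - s) - T)))
            - (T ^ (-ε) * h (T ^ (-ε) * (t - T)))) • U t y := by
      unfold smearI
      have e2 : (fun t : ℝ => (T ^ (-ε) * h (T ^ (-ε) * (t - T))) • U t (U s y - y))
          = fun t : ℝ => (T ^ (-ε) * h (T ^ (-ε) * (t - T))) • U t (U s y)
              - (T ^ (-ε) * h (T ^ (-ε) * (t - T))) • U t y := by
        funext t; rw [map_sub, smul_sub]
      rw [e2, integral_sub (hint T hT (U s y)) (hint T hT y)]
      have e3 : (fun t : ℝ => (T ^ (-ε) * h (T ^ (-ε) * (t - T))) • U t (U s y))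
          = fun t : ℝ => (T ^ (-ε) * h (T ^ (-ε) * (t - T))) • U (t + s) y := by
        funext t; rw [hUgrp t s]; rfl
      have e4 : (∫ t : ℝ, (T ^ (-ε) * h (T ^ (-ε) * (t - T))) • U (t + s) y)
          = ∫ t : ℝ, (T ^ (-ε) * h (T ^ (-ε) * ((t - s) - T))) • U t y := by
        have := integral_add_right_eq_self (μ := volume)
          (fun t : ℝ => (T ^ (-ε) * h (T ^ (-ε) * ((t - s) - T))) • U t y) s
        rw [← this]
        congr 1
        funext t
        simp
      rw [e3, e4, ← integral_sub hint2 (hint T hT y)]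
      congr 1
      funext t
      rw [sub_smul]
    rw [e1]
    -- bound the norm
    refine le_trans (norm_integral_le_integral_norm _) ?_
    have e5 : (fun t : ℝ => ‖((T ^ (-ε) * h (T ^ (-ε) * ((t - s) - T)))
        - (T ^ (-ε) * h (T ^ (-ε) * (t - T)))) • U t y‖)
        = fun t : ℝ => |(T ^ (-ε) * h (T ^ (-ε) * ((t - s) - T)))
            - (T ^ (-ε) * h (T ^ (-ε) * (t - T)))| * ‖y‖ := by
      funext t
      rw [norm_smul, hUnorm, Real.norm_eq_abs]
    rw [e5, MeasureTheory.integral_mul_const]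
    have escal : (∫ t : ℝ, |(T ^ (-ε) * h (T ^ (-ε) * ((t - s) - T)))
        - (T ^ (-ε) * h (T ^ (-ε) * (t - T)))|)
        = ∫ u : ℝ, |h (u - T ^ (-ε) * s) - h u| := by
      have e6 : (fun t : ℝ => |(T ^ (-ε) * h (T ^ (-ε) * ((t - s) - T)))
          - (T ^ (-ε) * h (T ^ (-ε) * (t - T)))|)
          = fun t : ℝ => T ^ (-ε) * |h (T ^ (-ε) * ((t - s) - T)) - h (T ^ (-ε) * (t - T))| := by
        funext t; rw [← mul_sub, abs_mul, abs_of_pos hcp]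
      rw [e6, MeasureTheory.integral_const_mul]
      have e7 : (∫ t : ℝ, |h (T ^ (-ε) * ((t - s) - T)) - h (T ^ (-ε) * (t - T))|)
          = ∫ t : ℝ, |h (T ^ (-ε) * (t - s)) - h (T ^ (-ε) * t)| := by
        have := integral_sub_right_eq_self (μ := volume)
          (fun t : ℝ => |h (T ^ (-ε) * (t - s)) - h (T ^ (-ε) * t)|) T
        rw [← this]
        congr 1
        funext t
        rw [sub_right_comm]
      rw [e7]
      have e8 : (fun t : ℝ => |h (T ^ (-ε) * (t - s)) - h (T ^ (-ε) * t)|)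
          = fun t : ℝ => (fun u : ℝ => |h (u - T ^ (-ε) * s) - h u|) (T ^ (-ε) * t) := by
        funext t
        simp only [mul_sub]
      rw [e8, MeasureTheory.Measure.integral_comp_mul_left
        (fun u : ℝ => |h (u - T ^ (-ε) * s) - h u|) (T ^ (-ε)), smul_eq_mul,
        abs_of_pos (inv_pos.mpr hcp), ← mul_assoc, mul_inv_cancel₀ hcne, one_mul]
    rw [escal]
  -- span convergence
  have hspan : ∀ w ∈ Submodule.span ℂ {x : H | ∃ (s : ℝ) (y : H), x = U s y - y},
      Tendsto (fun T : ℝ => smearI U h ε T w) atTop (𝓝 0) := by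
    intro w hw
    induction hw using Submodule.span_induction with
    | mem x hx =>
      obtain ⟨s, y, rfl⟩ := hx
      exact hgen s y
    | zero =>
      have hz : (fun T : ℝ => smearI U h ε T (0:H)) = fun _ : ℝ => (0:H) := by
        funext T
        unfold smearI
        simp
      rw [hz]
      exact tendsto_const_nhds
    | add x y hxm hym ihx ihy =>
      have hev : (fun T : ℝ => smearI U h ε T x + smearI U h ε T y)
          =ᶠ[atTop] fun T : ℝ => smearI U h ε T (x + y) := by
        filter_upwards [eventually_gt_atTop (0:ℝ)] with T hT
        exact (hIadd T hT x y).symm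
      have := ihx.add ihy
      rw [add_zero] at this
      exact this.congr' hev
    | smul a x hxm ihx =>
      have hev : (fun T : ℝ => a • smearI U h ε T x)
          =ᶠ[atTop] fun T : ℝ => smearI U h ε T (a • x) := by
        filter_upwards [eventually_gt_atTop (0:ℝ)] with T hT
        exact (hIsmul T hT a x).symm
      have := ihx.const_smul a
      rw [smul_zero] at this
      exact this.congr' hev
  -- convergence on the closure of the span
  have hclos : ∀ w ∈ closure ((Submodule.span ℂ
      {x : H | ∃ (s : ℝ) (y : H), x = U s y - y} : Submodule ℂ H) : Set H),
      Tendsto (fun T : ℝ => smearI U h ε T w) atTop (𝓝 0) := by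
    intro w hw
    rw [NormedAddCommGroup.tendsto_nhds_zero]
    intro δ hδ
    obtain ⟨z, hz1, hz2⟩ := Metric.mem_closure_iff.mp hw (δ/2) (by positivity)
    rw [dist_eq_norm] at hz2
    have h1 := hspan z hz1
    rw [NormedAddCommGroup.tendsto_nhds_zero] at h1
    filter_upwards [h1 (δ/2) (by positivity), eventually_gt_atTop (0:ℝ)] with T hT1 hT2
    have hIsplit : smearI U h ε T w = smearI U h ε T z + smearI U h ε T (w - z) := by
      have := hIadd T hT2 z (w - z)
      rwa [add_sub_cancel] at this
    calc ‖smearI U h ε T w‖ = ‖smearI U h ε T z + smearI U h ε T (w - z)‖ := by rw [hIsplit]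
      _ ≤ ‖smearI U h ε T z‖ + ‖smearI U h ε T (w - z)‖ := norm_add_le _ _
      _ < δ/2 + δ/2 := add_lt_add_of_lt_of_le hT1 (le_trans (hbound T hT2 (w - z)) hz2.le)
      _ = δ := by ring
  -- Φ - E₀ Φ is in the closure of the span
  set N : Submodule ℂ H := Submodule.span ℂ {x : H | ∃ (s : ℝ) (y : H), x = U s y - y} with hN
  set Nc : Submodule ℂ H := N.topologicalClosure with hNc
  haveI : CompleteSpace Nc := N.isClosed_topologicalClosure.completeSpace_coe
  set Ψ : H := Φ - E₀ Φ with hΨ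
  set w : H := Ψ - (Submodule.orthogonalProjectionOnto Nc Ψ : H) with hw
  have hworth : ∀ z ∈ Nc, ⟪w, z⟫_ℂ = 0 := Submodule.starProjection_inner_eq_zero Ψ
  have hgenmem : ∀ (s : ℝ) (y : H), U s y - y ∈ Nc := fun s y =>
    Submodule.le_topologicalClosure N (Submodule.subset_span ⟨s, y, rfl⟩)
  have hwfix : ∀ s : ℝ, U s w = w := by
    intro s
    have hy : ∀ y : H, ⟪U s w - w, y⟫_ℂ = 0 := by
      intro y
      rw [inner_sub_left]
      have h1 : ⟪w, U (-s) y - y⟫_ℂ = 0 := hworth _ (hgenmem (-s) y)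
      rw [inner_sub_right] at h1
      have h2 : ⟪U s w, y⟫_ℂ = ⟪w, U (-s) y⟫_ℂ := by
        have := hUuni s w (U (-s) y)
        rwa [hUinv s y] at this
      rw [h2]
      linear_combination h1
    have h3 := hy (U s w - w)
    rwa [inner_self_eq_zero, sub_eq_zero] at h3
  have hwE : E₀ w = w := hE₀fix w hwfix
  have hsym := ContinuousLinearMap.isSelfAdjoint_iff_isSymmetric.mp hE₀sa
  have hwPsi : ⟪w, Ψ⟫_ℂ = 0 := by
    have h1 : ⟪w, E₀ Φ⟫_ℂ = ⟪w, Φ⟫_ℂ := by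
      have h0 : ⟪E₀ w, Φ⟫_ℂ = ⟪w, E₀ Φ⟫_ℂ := hsym w Φ
      rw [hwE] at h0
      exact h0.symm
    rw [hΨ, inner_sub_right, h1, sub_self]
  have hww : ⟪w, w⟫_ℂ = 0 := by
    have h2 : ⟪w, (Submodule.orthogonalProjectionOnto Nc Ψ : H)⟫_ℂ = 0 :=
      hworth _ (Submodule.orthogonalProjectionOnto Nc Ψ).2
    nth_rewrite 2 [hw]
    rw [inner_sub_right, hwPsi, h2, sub_self]
  have hw0 : w = 0 := inner_self_eq_zero.mp hww
  have hΨNc : Ψ ∈ Nc := by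
    have : Ψ = (Submodule.orthogonalProjectionOnto Nc Ψ : H) := by
      rw [hw, sub_eq_zero] at hw0
      exact hw0
    rw [this]
    exact (Submodule.orthogonalProjectionOnto Nc Ψ).2
  have hΨclos : Ψ ∈ closure ((N : Submodule ℂ H) : Set H) := by
    rw [← Submodule.topologicalClosure_coe]
    exact hΨNc
  have hfinal : Tendsto (fun T : ℝ => smearI U h ε T Ψ) atTop (𝓝 0) := hclos Ψ hΨclos
  -- assemble
  have hev : (fun T : ℝ => E₀ Φ + smearI U h ε T Ψ)
      =ᶠ[atTop] fun T : ℝ => ∫ t : ℝ, (T ^ (-ε) * h (T ^ (-ε) * (t - T))) • U t Φ := by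
    filter_upwards [eventually_gt_atTop (0:ℝ)] with T hT
    have h1 := hIadd T hT (E₀ Φ) Ψ
    rw [hΨ, add_sub_cancel, hfix T hT] at h1
    exact h1.symm
  have h2 := tendsto_const_nhds (x := E₀ Φ) (f := atTop (α := ℝ)) |>.add hfinal
  rw [add_zero] at h2
  exact h2.congr' hev
end

section
/- Let U : ℝ → unitary group on H, B a bounded operator on H, and for n ∈ ℕ let E_n be the orthogonal projection onto the intersection of the kernels of all n-fold products B(x₁)⋯B(x_n), x_i ∈ ℝ, where B(x) = U(x)BU(x)*. Suppose the commutator function x ↦ ‖[B*, B(x)]‖ is integrable on ℝ. Then for each compact K ⊂ ℝ, ‖E_n (∫_K (B*B)(x) dx) E_n‖ ≤ (n−1) ∫_ℝ ‖[B*, B(x)]‖ dx, a bound uniform in K. -/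
/-!
Write `B(x) = U(x) B U(x)*` and `ψ = E₂ v`, so that the integrand is `E₂ f(x)` with
`f(x) = B(x)* B(x) ψ`. Since `B(y) B(x) ψ = 0`, we have `B(y) f(x) = [B(y), B(x)*] B(x) ψ`, and
conjugating by `U(x)` shows `‖[B(y), B(x)*]‖ = c(y - x)` with `c(z) = ‖[B*, B(z)]‖`; hence
`|⟪f(x), f(y)⟫| ≤ c(y - x) ‖B(x) ψ‖ ‖B(y) ψ‖`. Expanding `‖∫_K f‖²` as a double integral and
applying Schur's test to the translation kernel `c(y - x)` gives
`‖∫_K f‖² ≤ ‖c‖₁ ∫_K ‖B(x) ψ‖² = ‖c‖₁ ⟪ψ, ∫_K f⟫ ≤ ‖c‖₁ ‖ψ‖ ‖∫_K f‖`, and `‖E₂‖ ≤ 1`.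
-/

open MeasureTheory
open scoped InnerProductSpace ENNReal

theorem ENNReal.two_mul_le_add_sq (a b : ℝ≥0∞) : 2 * a * b ≤ a ^ 2 + b ^ 2 := by
  rcases eq_or_ne a ⊤ with rfl | ha
  · simp
  rcases eq_or_ne b ⊤ with rfl | hb
  · simp
  lift a to NNReal using ha
  lift b to NNReal using hb
  exact_mod_cast _root_.two_mul_le_add_sq a b

theorem lintegral_lintegral_mul_le_of_lintegral_le {α : Type*} [MeasurableSpace α]
    {μ : Measure α} [SFinite μ] {k : α → α → ℝ≥0∞} {g : α → ℝ≥0∞} {C : ℝ≥0∞}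
    (hk : Measurable (Function.uncurry k)) (hg : Measurable g)
    (hrow : ∀ x, ∫⁻ y, k x y ∂μ ≤ C) (hcol : ∀ y, ∫⁻ x, k x y ∂μ ≤ C) :
    ∫⁻ x, ∫⁻ y, k x y * (g x * g y) ∂μ ∂μ ≤ C * ∫⁻ x, g x ^ 2 ∂μ := by
  have hrow' : ∫⁻ x, ∫⁻ y, k x y * g x ^ 2 ∂μ ∂μ ≤ C * ∫⁻ x, g x ^ 2 ∂μ := by
    calc ∫⁻ x, ∫⁻ y, k x y * g x ^ 2 ∂μ ∂μ = ∫⁻ x, (∫⁻ y, k x y ∂μ) * g x ^ 2 ∂μ :=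
          lintegral_congr fun x => lintegral_mul_const _ (hk.comp measurable_prodMk_left)
      _ ≤ ∫⁻ x, C * g x ^ 2 ∂μ := lintegral_mono fun x => by gcongr; exact hrow x
      _ = C * ∫⁻ x, g x ^ 2 ∂μ := lintegral_const_mul _ (hg.pow_const 2)
  have hcol' : ∫⁻ x, ∫⁻ y, k x y * g y ^ 2 ∂μ ∂μ ≤ C * ∫⁻ y, g y ^ 2 ∂μ := by
    rw [lintegral_lintegral_swap (by fun_prop)]
    calc ∫⁻ y, ∫⁻ x, k x y * g y ^ 2 ∂μ ∂μ = ∫⁻ y, (∫⁻ x, k x y ∂μ) * g y ^ 2 ∂μ :=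
          lintegral_congr fun y => lintegral_mul_const _ (hk.comp measurable_prodMk_right)
      _ ≤ ∫⁻ y, C * g y ^ 2 ∂μ := lintegral_mono fun y => by gcongr; exact hcol y
      _ = C * ∫⁻ y, g y ^ 2 ∂μ := lintegral_const_mul _ (hg.pow_const 2)
  rw [← ENNReal.mul_le_mul_iff_right (a := 2) two_ne_zero ENNReal.ofNat_ne_top]
  calc 2 * ∫⁻ x, ∫⁻ y, k x y * (g x * g y) ∂μ ∂μ
      = ∫⁻ x, ∫⁻ y, k x y * (2 * g x * g y) ∂μ ∂μ := by
        rw [← lintegral_const_mul' _ _ ENNReal.ofNat_ne_top]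
        refine lintegral_congr fun x => ?_
        rw [← lintegral_const_mul' _ _ ENNReal.ofNat_ne_top]
        exact lintegral_congr fun y => by ring
    _ ≤ ∫⁻ x, ∫⁻ y, (k x y * g x ^ 2 + k x y * g y ^ 2) ∂μ ∂μ := by
        gcongr with x y
        rw [← mul_add]
        gcongr
        exact ENNReal.two_mul_le_add_sq _ _
    _ = ∫⁻ x, ∫⁻ y, k x y * g x ^ 2 ∂μ ∂μ + ∫⁻ x, ∫⁻ y, k x y * g y ^ 2 ∂μ ∂μ := by
        rw [← lintegral_add_left (by fun_prop)]
        exact lintegral_congr fun x => lintegral_add_left (by fun_prop) _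
    _ ≤ 2 * (C * ∫⁻ x, g x ^ 2 ∂μ) := by
        rw [two_mul]
        exact add_le_add hrow' hcol'

section InnerProduct

variable {α 𝕜 E : Type*} [MeasurableSpace α] {μ : Measure α} [RCLike 𝕜] [NormedAddCommGroup E]
  [InnerProductSpace 𝕜 E] [CompleteSpace E] [NormedSpace ℝ E]

theorem enorm_integral_sq_le_lintegral_lintegral_enorm_inner {f : α → E} (hf : Integrable f μ) :
    ‖∫ x, f x ∂μ‖ₑ ^ 2 ≤ ∫⁻ x, ∫⁻ y, ‖⟪f x, f y⟫_𝕜‖ₑ ∂μ ∂μ := by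
  set w := ∫ x, f x ∂μ
  have hw (z : E) : ⟪z, w⟫_𝕜 = ∫ y, ⟪z, f y⟫_𝕜 ∂μ := (integral_inner hf z).symm
  calc ‖w‖ₑ ^ 2 = ‖⟪w, w⟫_𝕜‖ₑ := by simp [inner_self_eq_norm_sq_to_K, ← ofReal_norm]
    _ ≤ ∫⁻ x, ‖⟪w, f x⟫_𝕜‖ₑ ∂μ := by rw [hw]; exact enorm_integral_le_lintegral_enorm _
    _ = ∫⁻ x, ‖⟪f x, w⟫_𝕜‖ₑ ∂μ :=
        lintegral_congr fun x => by rw [← inner_conj_symm, RCLike.enorm_conj]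
    _ ≤ ∫⁻ x, ∫⁻ y, ‖⟪f x, f y⟫_𝕜‖ₑ ∂μ ∂μ := by
        gcongr with x
        rw [hw]
        exact enorm_integral_le_lintegral_enorm _

theorem lintegral_enorm_sq_eq_enorm_inner_integral {f : α → E} {g : α → ℝ} {ψ : E}
    (hf : Integrable f μ) (hψ : ∀ x, ⟪ψ, f x⟫_𝕜 = ((g x ^ 2 : ℝ) : 𝕜)) :
    ∫⁻ x, ‖g x‖ₑ ^ 2 ∂μ = ‖⟪ψ, ∫ x, f x ∂μ⟫_𝕜‖ₑ := by
  have hg2 : Integrable (fun x => g x ^ 2) μ := by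
    refine (hf.const_inner (𝕜 := 𝕜) ψ).re.congr (.of_forall fun x => ?_)
    simp [hψ]
  calc ∫⁻ x, ‖g x‖ₑ ^ 2 ∂μ = ENNReal.ofReal (∫ x, g x ^ 2 ∂μ) := by
        rw [ofReal_integral_eq_lintegral_ofReal hg2 (.of_forall fun x => sq_nonneg _)]
        refine lintegral_congr fun x => ?_
        rw [← ofReal_norm, ← ENNReal.ofReal_pow (norm_nonneg _), Real.norm_eq_abs, sq_abs]
    _ = ‖⟪ψ, ∫ x, f x ∂μ⟫_𝕜‖ₑ := by
        rw [← integral_inner hf, funext hψ, integral_ofReal, ← ofReal_norm, RCLike.norm_ofReal,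
          abs_of_nonneg (integral_nonneg fun x => sq_nonneg _)]

end InnerProduct

section TranslationKernel

variable {G : Type*} [AddGroup G] [MeasurableSpace G] [MeasurableAdd₂ G] [MeasurableNeg G]
  {μ : Measure G} [SFinite μ] [μ.IsAddLeftInvariant] [μ.IsAddRightInvariant] [μ.IsNegInvariant]
  {𝕜 E : Type*} [RCLike 𝕜] [NormedAddCommGroup E] [InnerProductSpace 𝕜 E] [CompleteSpace E]
  [NormedSpace ℝ E]

theorem setLIntegral_setLIntegral_sub_mul_le {c g : G → ℝ≥0∞} (hc : AEMeasurable c μ)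
    (hg : Measurable g) (s : Set G) :
    ∫⁻ x in s, ∫⁻ y in s, c (y - x) * (g x * g y) ∂μ ∂μ
      ≤ (∫⁻ z, c z ∂μ) * ∫⁻ x in s, g x ^ 2 ∂μ := by
  set c' := hc.mk c
  have hcc' (x : G) : ∀ᵐ y ∂μ, c (y - x) = c' (y - x) :=
    (measurePreserving_sub_right μ x).quasiMeasurePreserving.ae_eq_comp hc.ae_eq_mk
  calc ∫⁻ x in s, ∫⁻ y in s, c (y - x) * (g x * g y) ∂μ ∂μ
      = ∫⁻ x in s, ∫⁻ y in s, c' (y - x) * (g x * g y) ∂μ ∂μ :=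
        lintegral_congr fun x => lintegral_congr_ae <| ae_restrict_of_ae <|
          (hcc' x).mono fun y hy => by simp only [hy]
    _ ≤ (∫⁻ z, c' z ∂μ) * ∫⁻ x in s, g x ^ 2 ∂μ := by
        refine lintegral_lintegral_mul_le_of_lintegral_le
          (hc.measurable_mk.comp (measurable_snd.sub measurable_fst)) hg (fun x => ?_) fun y => ?_
        · exact (setLIntegral_le_lintegral _ _).trans_eq (lintegral_sub_right_eq_self _ x)
        · exact (setLIntegral_le_lintegral _ _).trans_eq (lintegral_sub_left_eq_self _ y)
    _ = (∫⁻ z, c z ∂μ) * ∫⁻ x in s, g x ^ 2 ∂μ := by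
        rw [lintegral_congr_ae hc.ae_eq_mk]

theorem norm_setIntegral_le_of_norm_inner_le {f : G → E} {g c : G → ℝ} {ψ : E} {s : Set G}
    (hf : IntegrableOn f s μ) (hg : Measurable g) (hc : Integrable c μ) (hc0 : 0 ≤ c)
    (hfg : ∀ x y, ‖⟪f x, f y⟫_𝕜‖ ≤ c (y - x) * (g x * g y))
    (hψ : ∀ x, ⟪ψ, f x⟫_𝕜 = ((g x ^ 2 : ℝ) : 𝕜)) :
    ‖∫ x in s, f x ∂μ‖ ≤ (∫ z, c z ∂μ) * ‖ψ‖ := by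
  set w := ∫ x in s, f x ∂μ
  have hC : ∫⁻ z, ENNReal.ofReal (c z) ∂μ = ENNReal.ofReal (∫ z, c z ∂μ) :=
    (ofReal_integral_eq_lintegral_ofReal hc (.of_forall hc0)).symm
  have hg2 : ∫⁻ x in s, ‖g x‖ₑ ^ 2 ∂μ ≤ ‖ψ‖ₑ * ‖w‖ₑ := by
    rw [lintegral_enorm_sq_eq_enorm_inner_integral hf hψ]
    exact ENNReal.coe_le_coe.mpr (nnnorm_inner_le_nnnorm ψ w)
  have key : ‖w‖ₑ ^ 2 ≤ ENNReal.ofReal (∫ z, c z ∂μ) * (‖ψ‖ₑ * ‖w‖ₑ) :=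
    calc ‖w‖ₑ ^ 2 ≤ ∫⁻ x in s, ∫⁻ y in s, ‖⟪f x, f y⟫_𝕜‖ₑ ∂μ ∂μ :=
          enorm_integral_sq_le_lintegral_lintegral_enorm_inner hf
      _ ≤ ∫⁻ x in s, ∫⁻ y in s, ENNReal.ofReal (c (y - x)) * (‖g x‖ₑ * ‖g y‖ₑ) ∂μ ∂μ := by
          gcongr with x y
          simp only [← ofReal_norm, ← ENNReal.ofReal_mul (norm_nonneg _),
            ← ENNReal.ofReal_mul (hc0 _)]
          refine ENNReal.ofReal_le_ofReal ((hfg x y).trans (mul_le_mul_of_nonneg_left ?_ (hc0 _)))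
          rw [← norm_mul]
          exact Real.le_norm_self _
      _ ≤ (∫⁻ z, ENNReal.ofReal (c z) ∂μ) * ∫⁻ x in s, ‖g x‖ₑ ^ 2 ∂μ :=
          setLIntegral_setLIntegral_sub_mul_le hc.aemeasurable.ennreal_ofReal hg.enorm s
      _ ≤ ENNReal.ofReal (∫ z, c z ∂μ) * (‖ψ‖ₑ * ‖w‖ₑ) := by rw [hC]; gcongr
  have hC0 : 0 ≤ ∫ z, c z ∂μ := integral_nonneg hc0
  have hreal : ‖w‖ * ‖w‖ ≤ (∫ z, c z ∂μ) * ‖ψ‖ * ‖w‖ := by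
    rw [← ENNReal.ofReal_le_ofReal_iff (by positivity)]
    simpa [ENNReal.ofReal_mul, hC0, ofReal_norm, sq, mul_assoc] using key
  rcases (norm_nonneg w).eq_or_lt with h0 | hpos
  · rw [← h0]; positivity
  · exact le_of_mul_le_mul_right hreal hpos

end TranslationKernel

section Operators

variable {𝕜 H : Type*} [RCLike 𝕜] [NormedAddCommGroup H] [InnerProductSpace 𝕜 H] [CompleteSpace H]

theorem inner_star_mul_self_apply (A : H →L[𝕜] H) (ψ : H) :
    ⟪ψ, (star A * A) ψ⟫_𝕜 = ((‖A ψ‖ ^ 2 : ℝ) : 𝕜) := by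
  change ⟪ψ, star A (A ψ)⟫_𝕜 = _
  rw [ContinuousLinearMap.star_eq_adjoint, ContinuousLinearMap.adjoint_inner_right,
    inner_self_eq_norm_sq_to_K]
  push_cast; rfl

theorem norm_inner_star_mul_self_apply_le {A C : H →L[𝕜] H} {ψ : H} (h : C (A ψ) = 0) :
    ‖⟪(star A * A) ψ, (star C * C) ψ⟫_𝕜‖ ≤ ‖C * star A - star A * C‖ * (‖A ψ‖ * ‖C ψ‖) := by
  have hcomm : C (star A (A ψ)) = (C * star A - star A * C) (A ψ) := by
    simp [h]
  calc ‖⟪(star A * A) ψ, (star C * C) ψ⟫_𝕜‖ = ‖⟪(C * star A - star A * C) (A ψ), C ψ⟫_𝕜‖ := by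
        change ‖⟪star A (A ψ), star C (C ψ)⟫_𝕜‖ = _
        rw [← hcomm, ContinuousLinearMap.star_eq_adjoint C, ContinuousLinearMap.adjoint_inner_right]
    _ ≤ ‖(C * star A - star A * C) (A ψ)‖ * ‖C ψ‖ := norm_inner_le_norm _ _
    _ ≤ ‖C * star A - star A * C‖ * (‖A ψ‖ * ‖C ψ‖) := by
        rw [← mul_assoc]
        gcongr
        exact ContinuousLinearMap.le_opNorm _ _

end Operators

section UnitaryRep

variable {𝕜 H G : Type*} [RCLike 𝕜] [NormedAddCommGroup H] [InnerProductSpace 𝕜 H]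

structure IsUnitaryRep [AddGroup G] (U : G → H →L[𝕜] H) : Prop where
  map_add : ∀ s t, U (s + t) = U s ∘L U t
  map_zero : U 0 = 1
  inner_map_map : ∀ s x y, ⟪U s x, U s y⟫_𝕜 = ⟪x, y⟫_𝕜

namespace IsUnitaryRep

section AddGroup

variable [AddGroup G] {U : G → H →L[𝕜] H}

theorem comp_neg (hU : IsUnitaryRep U) (s : G) : U s ∘L U (-s) = 1 := by
  rw [← hU.map_add, add_neg_cancel, hU.map_zero]

theorem neg_comp (hU : IsUnitaryRep U) (s : G) : U (-s) ∘L U s = 1 := by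
  rw [← hU.map_add, neg_add_cancel, hU.map_zero]

theorem norm_map (hU : IsUnitaryRep U) (s : G) (v : H) : ‖U s v‖ = ‖v‖ :=
  (LinearMap.norm_map_iff_inner_map_map (U s)).mpr (hU.inner_map_map s) v

theorem continuous_apply [TopologicalSpace G] (hU : IsUnitaryRep U)
    (hcont : ∀ v, Continuous fun s => U s v) {w : G → H} (hw : Continuous w) :
    Continuous fun s => U s (w s) := by
  refine continuous_iff_continuousAt.mpr fun s₀ => ?_
  rw [ContinuousAt, tendsto_iff_norm_sub_tendsto_zero]
  have hle (s : G) :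
      ‖U s (w s) - U s₀ (w s₀)‖ ≤ ‖w s - w s₀‖ + ‖U s (w s₀) - U s₀ (w s₀)‖ := by
    calc ‖U s (w s) - U s₀ (w s₀)‖ = ‖U s (w s - w s₀) + (U s (w s₀) - U s₀ (w s₀))‖ := by
          rw [map_sub, sub_add_sub_cancel]
      _ ≤ ‖w s - w s₀‖ + ‖U s (w s₀) - U s₀ (w s₀)‖ := by
          rw [← hU.norm_map s (w s - w s₀)]
          exact norm_add_le _ _
  refine squeeze_zero (fun _ => norm_nonneg _) hle ?_
  simpa using (tendsto_iff_norm_sub_tendsto_zero.mp (hw.tendsto s₀)).add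
    (tendsto_iff_norm_sub_tendsto_zero.mp ((hcont (w s₀)).tendsto s₀))

variable [CompleteSpace H]

theorem star_eq (hU : IsUnitaryRep U) (s : G) : star (U s) = U (-s) := by
  have h : star (U s) ∘L U s = 1 :=
    ((U s).inner_map_map_iff_adjoint_comp_self).mp (hU.inner_map_map s)
  calc star (U s) = star (U s) ∘L U s ∘L U (-s) := by rw [hU.comp_neg]; rfl
    _ = U (-s) := by rw [← ContinuousLinearMap.comp_assoc, h]; rfl

theorem mem_unitary (hU : IsUnitaryRep U) (s : G) : U s ∈ unitary (H →L[𝕜] H) :=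
  Unitary.mem_iff.mpr <| by rw [hU.star_eq]; exact ⟨hU.neg_comp s, hU.comp_neg s⟩

/-- `hU.conj x B` is the paper's `B(x) = U(x) B U(x)*`. -/
noncomputable def conj (hU : IsUnitaryRep U) (s : G) : (H →L[𝕜] H) ≃⋆ₐ[𝕜] (H →L[𝕜] H) :=
  Unitary.conjStarAlgAut 𝕜 _ ⟨U s, hU.mem_unitary s⟩

theorem conj_eq (hU : IsUnitaryRep U) (s : G) (T : H →L[𝕜] H) :
    hU.conj s T = U s ∘L T ∘L U (-s) := by
  simp only [conj, Unitary.conjStarAlgAut_apply, hU.star_eq, mul_assoc]; rfl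

theorem conj_apply (hU : IsUnitaryRep U) (s : G) (T : H →L[𝕜] H) (v : H) :
    hU.conj s T v = U s (T (U (-s) v)) := by
  rw [conj_eq]; rfl

theorem conj_conj (hU : IsUnitaryRep U) (s t : G) (T : H →L[𝕜] H) :
    hU.conj s (hU.conj t T) = hU.conj (s + t) T := by
  have : (⟨U (s + t), hU.mem_unitary _⟩ : unitary (H →L[𝕜] H))
      = ⟨U s, hU.mem_unitary s⟩ * ⟨U t, hU.mem_unitary t⟩ :=
    Subtype.ext (hU.map_add s t)
  simp only [conj, this, Unitary.conjStarAlgAut_mul_apply]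

theorem norm_conj (hU : IsUnitaryRep U) (s : G) (T : H →L[𝕜] H) : ‖hU.conj s T‖ = ‖T‖ := by
  rw [conj_eq]
  exact (CStarRing.norm_mem_unitary_mul _ (hU.mem_unitary s)).trans
    (CStarRing.norm_mul_mem_unitary _ (hU.mem_unitary (-s)))

theorem continuous_conj_apply [TopologicalSpace G] [ContinuousNeg G] (hU : IsUnitaryRep U)
    (hcont : ∀ v, Continuous fun s => U s v) (T : H →L[𝕜] H) (v : H) :
    Continuous fun s => hU.conj s T v := by
  simp_rw [hU.conj_apply]
  exact hU.continuous_apply hcont (T.continuous.comp ((hcont v).comp continuous_neg))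

end AddGroup

theorem norm_inner_conj_star_mul_self_le [AddCommGroup G] [CompleteSpace H]
    {U : G → H →L[𝕜] H} (hU : IsUnitaryRep U) {B : H →L[𝕜] H} {ψ : H}
    (hψ : ∀ x y, hU.conj x B (hU.conj y B ψ) = 0) (x y : G) :
    ‖⟪hU.conj x (star B * B) ψ, hU.conj y (star B * B) ψ⟫_𝕜‖
      ≤ ‖star B * hU.conj (y - x) B - hU.conj (y - x) B * star B‖
        * (‖hU.conj x B ψ‖ * ‖hU.conj y B ψ‖) := by
  have hy : hU.conj y B = hU.conj x (hU.conj (y - x) B) := by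
    rw [conj_conj, add_sub_cancel]
  simp only [map_mul, map_star]
  calc _ ≤ ‖hU.conj y B * star (hU.conj x B) - star (hU.conj x B) * hU.conj y B‖
        * (‖hU.conj x B ψ‖ * ‖hU.conj y B ψ‖) := norm_inner_star_mul_self_apply_le (hψ y x)
    _ = _ := by
        rw [hy, ← map_star, ← map_mul, ← map_mul, ← map_sub, norm_conj, norm_sub_rev]

end IsUnitaryRep
end UnitaryRep

theorem stmt_13_general {H : Type*} [NormedAddCommGroup H] [InnerProductSpace ℂ H] [CompleteSpace H]
    (U : ℝ → H →L[ℂ] H)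
    (hUgrp : ∀ s t : ℝ, U (s + t) = U s ∘L U t) (hU0 : U 0 = 1)
    (hUuni : ∀ (s : ℝ) (x y : H), ⟪U s x, U s y⟫_ℂ = ⟪x, y⟫_ℂ)
    (hUcont : ∀ x : H, Continuous fun s : ℝ => U s x)
    (B : H →L[ℂ] H)
    (hint : Integrable (fun x : ℝ =>
      ‖(ContinuousLinearMap.adjoint B) ∘L (U x ∘L B ∘L U (-x))
        - (U x ∘L B ∘L U (-x)) ∘L (ContinuousLinearMap.adjoint B)‖))
    (E₂ : H →L[ℂ] H) (hE₂sa : IsSelfAdjoint E₂) (hE₂idem : E₂ ∘L E₂ = E₂)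
    (hE₂mem : ∀ (v : H) (x y : ℝ),
      (U x) (B ((U (-x)) ((U y) (B ((U (-y)) (E₂ v)))))) = 0)
    (K : Set ℝ) (hK : IsCompact K) :
    ∀ v : H,
      ‖∫ x in K, E₂ ((U x) ((ContinuousLinearMap.adjoint B) (B ((U (-x)) (E₂ v))))) ∂volume‖
        ≤ (∫ x : ℝ, ‖(ContinuousLinearMap.adjoint B) ∘L (U x ∘L B ∘L U (-x))
            - (U x ∘L B ∘L U (-x)) ∘L (ContinuousLinearMap.adjoint B)‖) * ‖v‖ := by
  intro v
  have hU : IsUnitaryRep U := ⟨hUgrp, hU0, hUuni⟩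
  have hE₂ (w : H) : ‖E₂ w‖ ≤ ‖w‖ := by
    simpa using E₂.le_of_opNorm_le (IsStarProjection.norm_le E₂ ⟨hE₂idem, hE₂sa⟩) w
  set ψ := E₂ v
  have hcomm (z : ℝ) : star B * hU.conj z B - hU.conj z B * star B
      = ContinuousLinearMap.adjoint B ∘L (U z ∘L B ∘L U (-z))
        - (U z ∘L B ∘L U (-z)) ∘L ContinuousLinearMap.adjoint B := by
    rw [hU.conj_eq]; rfl
  have hfK : IntegrableOn (fun x => hU.conj x (star B * B) ψ) K :=
    (hU.continuous_conj_apply hUcont _ ψ).continuousOn.integrableOn_compact hK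
  have hip := hU.norm_inner_conj_star_mul_self_le fun x y => by
    simpa only [hU.conj_apply] using hE₂mem v x y
  have hψ (x : ℝ) : ⟪ψ, hU.conj x (star B * B) ψ⟫_ℂ = ((‖hU.conj x B ψ‖ ^ 2 : ℝ) : ℂ) := by
    rw [map_mul, map_star]; exact inner_star_mul_self_apply _ _
  have hc : Integrable fun z => ‖star B * hU.conj z B - hU.conj z B * star B‖ := by
    simpa only [hcomm] using hint
  have hbound := norm_setIntegral_le_of_norm_inner_le hfK
    (hU.continuous_conj_apply hUcont B ψ).norm.measurable hc (fun _ => norm_nonneg _) hip hψ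
  simp only [hcomm] at hbound
  calc ‖∫ x in K, E₂ (U x (ContinuousLinearMap.adjoint B (B (U (-x) ψ))))‖
      = ‖E₂ (∫ x in K, hU.conj x (star B * B) ψ)‖ := by
        rw [← E₂.integral_comp_comm hfK]
        simp only [hU.conj_apply]; rfl
    _ ≤ ‖∫ x in K, hU.conj x (star B * B) ψ‖ := hE₂ _
    _ ≤ _ := hbound
    _ ≤ _ := by gcongr; exact hE₂ v

/-- Buchholz's harmonic-analysis bound (case n = 2): with B(x) = U(x)BU(x)* and E₂ the
orthogonal projection onto ⋂_{x,y} ker B(x)B(y), if x ↦ ‖[B*, B(x)]‖ is integrable on ℝ,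
then for each compact K, ‖E₂ (∫_K (B*B)(x) dx) E₂‖ ≤ ∫_ℝ ‖[B*, B(x)]‖ dx, uniformly in K. -/
theorem stmt_13 {H : Type*} [NormedAddCommGroup H] [InnerProductSpace ℂ H] [CompleteSpace H]
    (U : ℝ → H →L[ℂ] H)
    (hUgrp : ∀ s t : ℝ, U (s + t) = U s ∘L U t) (hU0 : U 0 = 1)
    (hUuni : ∀ (s : ℝ) (x y : H), ⟪U s x, U s y⟫_ℂ = ⟪x, y⟫_ℂ)
    (hUcont : ∀ x : H, Continuous fun s : ℝ => U s x)
    (B : H →L[ℂ] H)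
    (hint : Integrable (fun x : ℝ =>
      ‖(ContinuousLinearMap.adjoint B) ∘L (U x ∘L B ∘L U (-x))
        - (U x ∘L B ∘L U (-x)) ∘L (ContinuousLinearMap.adjoint B)‖))
    (E₂ : H →L[ℂ] H) (hE₂sa : IsSelfAdjoint E₂) (hE₂idem : E₂ ∘L E₂ = E₂)
    (hE₂mem : ∀ (v : H) (x y : ℝ),
      (U x) (B ((U (-x)) ((U y) (B ((U (-y)) (E₂ v)))))) = 0)
    (hE₂max : ∀ v : H,
      (∀ x y : ℝ, (U x) (B ((U (-x)) ((U y) (B ((U (-y)) v))))) = 0) → E₂ v = v)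
    (K : Set ℝ) (hK : IsCompact K) :
    ∀ v : H,
      ‖∫ x in K, E₂ ((U x) ((ContinuousLinearMap.adjoint B) (B ((U (-x)) (E₂ v))))) ∂volume‖
        ≤ (∫ x : ℝ, ‖(ContinuousLinearMap.adjoint B) ∘L (U x ∘L B ∘L U (-x))
            - (U x ∘L B ∘L U (-x)) ∘L (ContinuousLinearMap.adjoint B)‖) * ‖v‖ :=
  stmt_13_general U hUgrp hU0 hUuni hUcont B hint E₂ hE₂sa hE₂idem hE₂mem K hK
end
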